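/- arXiv:2002.02438 — 2 statements merged into one kernel-verified Lean document; each statement's English description precedes it below -/
import Mathlib

section
/- Let z₁, z₂, u₁, u₂, m₁, m₂ ∈ ℂ satisfy |mᵢ|² + |uᵢ zᵢ|² ≤ 1 for i = 1, 2. Then every eigenvalue τ of the 2×2 matrix R = [[z₁ conj(z₂) u₁u₂, m₁m₂], [m₁m₂, conj(z₁) z₂ u₁u₂]] satisfies Re τ ≤ 1. -/
/-!
Bounding `|τ|` already suffices. By Gershgorin's theorem an eigenvalue is bounded in modulus by
some absolute row sum of `R`; both row sums of `R` equal `|u₁z₁||u₂z₂| + |m₁||m₂|`, and by AM-GM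
this is at most `(|m₁|² + |u₁z₁|² + |m₂|² + |u₂z₂|²) / 2 ≤ 1`.
-/

open Matrix

theorem Matrix.norm_le_of_hasEigenvalue {n K : Type*} [Fintype n] [DecidableEq n]
    [NormedField K] {A : Matrix n n K} {μ : K} {r : ℝ}
    (hμ : Module.End.HasEigenvalue (toLin' A) μ) (hA : ∀ k, ∑ j, ‖A k j‖ ≤ r) :
    ‖μ‖ ≤ r := by
  obtain ⟨k, hk⟩ := eigenvalue_mem_ball hμ
  calc ‖μ‖ ≤ ‖A k k‖ + ‖μ - A k k‖ := norm_le_norm_add_norm_sub' μ (A k k)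
    _ ≤ ‖A k k‖ + ∑ j ∈ Finset.univ.erase k, ‖A k j‖ := by
      gcongr
      rwa [Metric.mem_closedBall, dist_eq_norm] at hk
    _ = ∑ j, ‖A k j‖ := Finset.add_sum_erase _ (fun j => ‖A k j‖) (Finset.mem_univ k)
    _ ≤ r := hA k

theorem mul_add_mul_le_one_of_sq_add_sq_le_one {m n p q : ℝ}
    (h₁ : m ^ 2 + p ^ 2 ≤ 1) (h₂ : n ^ 2 + q ^ 2 ≤ 1) : m * n + p * q ≤ 1 := by
  nlinarith [sq_nonneg (m - n), sq_nonneg (p - q)]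

/-- If `|mᵢ|² + |uᵢ zᵢ|² ≤ 1` for `i = 1,2`, then every eigenvalue `τ` of the matrix
`R = [[z₁ conj(z₂) u₁u₂, m₁m₂], [m₁m₂, conj(z₁) z₂ u₁u₂]]` satisfies `Re τ ≤ 1`. -/
theorem stmt1 (z₁ z₂ u₁ u₂ m₁ m₂ : ℂ)
    (h₁ : ‖m₁‖ ^ 2 + ‖u₁ * z₁‖ ^ 2 ≤ 1)
    (h₂ : ‖m₂‖ ^ 2 + ‖u₂ * z₂‖ ^ 2 ≤ 1)
    (τ : ℂ) (v : Fin 2 → ℂ) (hv : v ≠ 0)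
    (hev : (!![z₁ * (starRingEnd ℂ) z₂ * (u₁ * u₂), m₁ * m₂;
        m₁ * m₂, (starRingEnd ℂ) z₁ * z₂ * (u₁ * u₂)]).mulVec v = τ • v) :
    τ.re ≤ 1 := by
  have hτ : Module.End.HasEigenvalue (toLin' !![z₁ * (starRingEnd ℂ) z₂ * (u₁ * u₂), m₁ * m₂;
      m₁ * m₂, (starRingEnd ℂ) z₁ * z₂ * (u₁ * u₂)]) τ :=
    Module.End.hasEigenvalue_of_hasEigenvector
      ⟨Module.End.mem_eigenspace_iff.mpr (by rwa [toLin'_apply]), hv⟩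
  have hrow : ‖m₁‖ * ‖m₂‖ + ‖u₁ * z₁‖ * ‖u₂ * z₂‖ ≤ 1 :=
    mul_add_mul_le_one_of_sq_add_sq_le_one h₁ h₂
  refine (Complex.re_le_norm τ).trans (Matrix.norm_le_of_hasEigenvalue hτ fun k => ?_)
  simp only [norm_mul] at hrow
  fin_cases k <;>
  · simp only [Fin.zero_eta, Fin.mk_one, Fin.isValue, of_apply, cons_val', cons_val_fin_one,
      cons_val_zero, cons_val_one, Fin.sum_univ_two, norm_mul, Complex.norm_conj]
    linarith
end

section
/- Let z, w, m ∈ ℂ with m ≠ 0, w + m ≠ 0, and suppose −1/m = w + m − |z|²/(w+m). With u := m/(w+m), one has the identity (1 − |m|² − |u|²|z|²)·Im m = (|m|² + |u|²|z|²)·Im w. In particular, if Im m and Im w are both strictly positive, then |m|² + |u|²|z|² < 1. -/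
/-!
Taking imaginary parts of `-1/m = s - r/s` (with `s = w + m`, `r = |z|²` real) gives
`Im m / |m|² = Im s · (1 + r/|s|²)`, i.e. `Im m = (|m|² + |u|² r) · Im s` with `u = m/s`.
Since `Im s = Im w + Im m`, this is the identity; when `Im m, Im w > 0` it exhibits
`|m|² + |u|² r` as the ratio `Im m / (Im w + Im m) < 1`.
-/

open Complex

theorem Complex.im_div_normSq_eq_of_neg_one_div_eq {m s : ℂ} {r : ℝ}
    (h : -1 / m = s - r / s) : m.im / normSq m = s.im * (1 + r / normSq s) := by
  have him := congrArg im h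
  simp only [neg_div, one_div, neg_im, inv_im, neg_neg, sub_im, div_eq_mul_inv (r : ℂ),
    im_ofReal_mul] at him
  rw [him]
  ring

theorem Complex.im_eq_of_neg_one_div_eq {m s : ℂ} {r : ℝ} (hm : m ≠ 0)
    (h : -1 / m = s - r / s) : m.im = (‖m‖ ^ 2 + ‖m / s‖ ^ 2 * r) * s.im :=
  calc m.im = m.im / normSq m * normSq m := (div_mul_cancel₀ _ (normSq_pos.mpr hm).ne').symm
    _ = s.im * (1 + r / normSq s) * normSq m := by rw [im_div_normSq_eq_of_neg_one_div_eq h]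
    _ = (‖m‖ ^ 2 + ‖m / s‖ ^ 2 * r) * s.im := by
      rw [Complex.sq_norm, Complex.sq_norm, normSq_div]
      ring

theorem stmt3_general (z w m : ℂ) (hm : m ≠ 0)
    (heq : -1 / m = w + m - (‖z‖ : ℂ) ^ 2 / (w + m)) :
    (1 - ‖m‖ ^ 2 - ‖m / (w + m)‖ ^ 2 * ‖z‖ ^ 2) * m.im =
        (‖m‖ ^ 2 + ‖m / (w + m)‖ ^ 2 * ‖z‖ ^ 2) * w.im ∧
      (0 < m.im → 0 < w.im →
        ‖m‖ ^ 2 + ‖m / (w + m)‖ ^ 2 * ‖z‖ ^ 2 < 1) := by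
  have hdyson : -1 / m = (w + m) - ((‖z‖ ^ 2 : ℝ) : ℂ) / (w + m) := by
    rw [heq]
    push_cast
    rfl
  have him := im_eq_of_neg_one_div_eq hm hdyson
  rw [add_im] at him
  refine ⟨by linear_combination him, fun hmi hwi => ?_⟩
  refine lt_of_mul_lt_mul_right (a := w.im + m.im) ?_ (by linarith)
  linarith

/-- Taking imaginary parts of the scalar Dyson equation gives
`(1 - |m|² - |u|²|z|²)·Im m = (|m|² + |u|²|z|²)·Im w` with `u = m/(w+m)`;
in particular if `Im m > 0` and `Im w > 0` then `|m|² + |u|²|z|² < 1`. -/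
theorem stmt3 (z w m : ℂ) (hm : m ≠ 0) (hwm : w + m ≠ 0)
    (heq : -1 / m = w + m - (‖z‖ : ℂ) ^ 2 / (w + m)) :
    (1 - ‖m‖ ^ 2 - ‖m / (w + m)‖ ^ 2 * ‖z‖ ^ 2) * m.im =
        (‖m‖ ^ 2 + ‖m / (w + m)‖ ^ 2 * ‖z‖ ^ 2) * w.im ∧
      (0 < m.im → 0 < w.im →
        ‖m‖ ^ 2 + ‖m / (w + m)‖ ^ 2 * ‖z‖ ^ 2 < 1) :=
  stmt3_general z w m hm heq
end
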